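/- For all Z > 0, ε ∈ (0,1), 0 < k_min ≤ k_max and C > 0 there exists C₁ > 0, depending only on Z, ε, k_min, k_max and C, with the following property. Let k ∈ [k_min, k_max] and let q₁, r₁, q₂, r₂ : [0,Z] → ℝ be twice continuously differentiable with |q₁'(z)|, |r₁'(z)|, |q₂'(z)|, |r₂'(z)| ≤ C and |r₁''(z)| ≤ C for all z ∈ [0,Z]. Set h₁ = q₂ − q₁ and h₂ = r₂ − r₁. Then for every z ∈ [0,Z]: L₂(q₂,r₂)(z)² − L₂(q₁,r₁)(z)² − 2·L₂(q₁,r₁)(z)·L₂,lin(h₁,h₂)(z) ≥ (1/2)·h₂''(z)² − C₁·( h₁'(z)² + h₂'(z)² ), where the linearization L₂,lin is taken at the base point (q₁,r₁). -/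

import Mathlib

/-!
Write `x = q'(z)`, `y = r'(z)`, `b = r''(z)`, so that `L₂(q,r)(z) = b + N(x,y)` with
`N = L2Symbol ε k` a quadratic polynomial in `(x,y)` whose coefficients depend continuously on
`k > 0`. Expanding `N` exactly to second order at `(q₁',r₁')` gives `L₂(q₂,r₂) = B + ℓ + Q`,
where `B = L₂(q₁,r₁)`, `ℓ = L₂,lin(h₁,h₂)` and `Q = L2SymbolQuad ε k h₁' h₂'`, and then
`L₂(q₂,r₂)² − B² − 2Bℓ = (ℓ + Q)² + 2BQ`. Since `ℓ = h₂'' + O(|h₁'| + |h₂'|)`, the square is at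
least `h₂''²/2 − O(h₁'² + h₂'²)`; and `|B|` is bounded while `|Q| = O(h₁'² + h₂'²)`. All the
constants are uniform because the coefficients are continuous on a compact set of parameters.
-/

/-- The nonlinear operator `L₂(q,r)` of equation (3.21). -/
noncomputable def L2 (ε k : ℝ) (q r : ℝ → ℝ) (z : ℝ) : ℝ :=
  deriv (deriv r) z + (2 * k / ε) * deriv q z * (deriv q z - deriv r z)
    + (1 / ε ^ 2) * (deriv q z - deriv r z) ^ 2
    - 2 * Real.sqrt k * deriv q z
    - (deriv q z - deriv r z) / (ε * Real.sqrt k)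

/-- The linearization of `L₂` at the base point `(q,r)`, applied to `(h₁,h₂)`. -/
noncomputable def L2lin (ε k : ℝ) (q r h₁ h₂ : ℝ → ℝ) (z : ℝ) : ℝ :=
  deriv (deriv h₂) z
    + (2 * k / ε) * deriv h₁ z * (deriv q z - deriv r z)
    + (2 * k / ε) * deriv q z * (deriv h₁ z - deriv h₂ z)
    + (2 / ε ^ 2) * (deriv q z - deriv r z) * (deriv h₁ z - deriv h₂ z)
    - 2 * Real.sqrt k * deriv h₁ z
    - (deriv h₁ z - deriv h₂ z) / (ε * Real.sqrt k)

open Set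

section Symbol

variable (ε k : ℝ)

noncomputable def L2Symbol (x y : ℝ) : ℝ :=
  (2 * k / ε) * x * (x - y) + (1 / ε ^ 2) * (x - y) ^ 2 - 2 * Real.sqrt k * x
    - (x - y) / (ε * Real.sqrt k)

noncomputable def L2SymbolDx (x y : ℝ) : ℝ :=
  (2 * k / ε) * (x - y) + (2 * k / ε) * x + (2 / ε ^ 2) * (x - y) - 2 * Real.sqrt k
    - 1 / (ε * Real.sqrt k)

noncomputable def L2SymbolDy (x y : ℝ) : ℝ :=
  -((2 * k / ε) * x) - (2 / ε ^ 2) * (x - y) + 1 / (ε * Real.sqrt k)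

noncomputable def L2SymbolQuad (u v : ℝ) : ℝ :=
  (2 * k / ε) * u * (u - v) + (1 / ε ^ 2) * (u - v) ^ 2

theorem L2_eq (q r : ℝ → ℝ) (z : ℝ) :
    L2 ε k q r z = deriv (deriv r) z + L2Symbol ε k (deriv q z) (deriv r z) := by
  unfold L2 L2Symbol
  ring

theorem L2lin_eq (q r h₁ h₂ : ℝ → ℝ) (z : ℝ) :
    L2lin ε k q r h₁ h₂ z = deriv (deriv h₂) z
      + L2SymbolDx ε k (deriv q z) (deriv r z) * deriv h₁ z
      + L2SymbolDy ε k (deriv q z) (deriv r z) * deriv h₂ z := by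
  unfold L2lin L2SymbolDx L2SymbolDy
  ring

theorem L2Symbol_eq_add (x₁ y₁ x₂ y₂ : ℝ) :
    L2Symbol ε k x₂ y₂ = L2Symbol ε k x₁ y₁ + L2SymbolDx ε k x₁ y₁ * (x₂ - x₁)
      + L2SymbolDy ε k x₁ y₁ * (y₂ - y₁) + L2SymbolQuad ε k (x₂ - x₁) (y₂ - y₁) := by
  unfold L2Symbol L2SymbolDx L2SymbolDy L2SymbolQuad
  ring

variable {ε k}

theorem abs_L2SymbolQuad_le (hε : 0 < ε) {kmax : ℝ} (hk : k ∈ Icc 0 kmax) (u v : ℝ) :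
    |L2SymbolQuad ε k u v| ≤ (3 * kmax / ε + 2 / ε ^ 2) * (u ^ 2 + v ^ 2) := by
  have hmix : |u * (u - v)| ≤ 3 / 2 * (u ^ 2 + v ^ 2) :=
    abs_le.mpr ⟨by nlinarith [sq_nonneg (u - v), sq_nonneg v],
      by nlinarith [sq_nonneg (u + v), sq_nonneg v]⟩
  have hdiff : (u - v) ^ 2 ≤ 2 * (u ^ 2 + v ^ 2) := by nlinarith [sq_nonneg (u + v)]
  calc |L2SymbolQuad ε k u v|
      ≤ |2 * k / ε * (u * (u - v))| + |1 / ε ^ 2 * (u - v) ^ 2| := by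
        rw [L2SymbolQuad, mul_assoc (2 * k / ε)]
        exact abs_add_le _ _
    _ = 2 * k / ε * |u * (u - v)| + 1 / ε ^ 2 * (u - v) ^ 2 := by
        have hk₀ := hk.1
        rw [abs_mul (2 * k / ε), abs_mul (1 / ε ^ 2), abs_of_nonneg (by positivity : 0 ≤ 2 * k / ε),
          abs_of_nonneg (by positivity : 0 ≤ 1 / ε ^ 2), abs_sq]
    _ ≤ 2 * kmax / ε * (3 / 2 * (u ^ 2 + v ^ 2)) + 1 / ε ^ 2 * (2 * (u ^ 2 + v ^ 2)) := by
        have hkmax : 0 ≤ kmax := hk.1.trans hk.2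
        gcongr
        exact hk.2
    _ = (3 * kmax / ε + 2 / ε ^ 2) * (u ^ 2 + v ^ 2) := by ring

theorem continuousOn_L2Symbol_coeffs (hε : ε ≠ 0) :
    ContinuousOn (fun p : ℝ × ℝ × ℝ => (L2Symbol ε p.1 p.2.1 p.2.2,
      L2SymbolDx ε p.1 p.2.1 p.2.2, L2SymbolDy ε p.1 p.2.1 p.2.2)) (Ioi 0 ×ˢ univ) := by
  unfold L2Symbol L2SymbolDx L2SymbolDy
  fun_prop (disch := intro p hp; first
    | exact hε
    | exact mul_ne_zero hε (Real.sqrt_pos.2 (mem_prod.mp hp).1).ne')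

theorem exists_bound_L2Symbol_coeffs (hε : ε ≠ 0) {kmin : ℝ} (hkmin : 0 < kmin) (kmax C : ℝ) :
    ∃ M, ∀ k ∈ Icc kmin kmax, ∀ x y, |x| ≤ C → |y| ≤ C →
      |L2Symbol ε k x y| ≤ M ∧ |L2SymbolDx ε k x y| ≤ M ∧ |L2SymbolDy ε k x y| ≤ M := by
  have hbox : IsCompact (Icc kmin kmax ×ˢ Icc (-C) C ×ˢ Icc (-C) C) :=
    isCompact_Icc.prod (isCompact_Icc.prod isCompact_Icc)
  obtain ⟨M, hM⟩ := hbox.exists_bound_of_continuousOn <|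
    (continuousOn_L2Symbol_coeffs hε).mono fun p hp =>
      ⟨hkmin.trans_le (mem_prod.mp hp).1.1, trivial⟩
  refine ⟨M, fun k hk x y hx hy => ?_⟩
  have h := hM (k, x, y) ⟨hk, abs_le.mp hx, abs_le.mp hy⟩
  exact ⟨(norm_fst_le _).trans h, (norm_fst_le _).trans ((norm_snd_le _).trans h),
    (norm_snd_le _).trans ((norm_snd_le _).trans h)⟩

end Symbol

theorem sq_add_sub_sq_sub_two_mul_ge {B d P R Q u v MB M K W₀ C₁ : ℝ}
    (hB : |B| ≤ MB) (hP : |P| ≤ M) (hR : |R| ≤ M) (hQ : |Q| ≤ K * (u ^ 2 + v ^ 2))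
    (hW₀ : u ^ 2 + v ^ 2 ≤ W₀) (hC₁ : 4 * M ^ 2 + 2 * K ^ 2 * W₀ + 2 * MB * K ≤ C₁) :
    (B + d + (P * u + R * v) + Q) ^ 2 - B ^ 2 - 2 * B * (d + (P * u + R * v))
      ≥ 1 / 2 * d ^ 2 - C₁ * (u ^ 2 + v ^ 2) := by
  set W := u ^ 2 + v ^ 2
  have hW : 0 ≤ W := by positivity
  have hlin : (P * u + R * v) ^ 2 ≤ 2 * M ^ 2 * W := by
    have hP2 : P ^ 2 ≤ M ^ 2 := sq_le_sq' (abs_le.mp hP).1 (abs_le.mp hP).2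
    have hR2 : R ^ 2 ≤ M ^ 2 := sq_le_sq' (abs_le.mp hR).1 (abs_le.mp hR).2
    nlinarith [sq_nonneg (P * v - R * u), mul_le_mul_of_nonneg_left hP2 hW,
      mul_le_mul_of_nonneg_left hR2 hW]
  have hquad : Q ^ 2 ≤ K ^ 2 * W₀ * W := by
    have : Q ^ 2 ≤ (K * W) ^ 2 := by
      rw [← sq_abs]; exact pow_le_pow_left₀ (abs_nonneg Q) hQ 2
    nlinarith [mul_le_mul_of_nonneg_left hW₀ (mul_nonneg (sq_nonneg K) hW)]
  have hcross : |B| * |Q| ≤ MB * (K * W) :=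
    mul_le_mul hB hQ (abs_nonneg Q) ((abs_nonneg B).trans hB)
  have hexpand : (B + d + (P * u + R * v) + Q) ^ 2 - B ^ 2 - 2 * B * (d + (P * u + R * v))
      = (d + ((P * u + R * v) + Q)) ^ 2 + 2 * B * Q := by ring
  rw [hexpand]
  nlinarith [sq_nonneg (d + 2 * ((P * u + R * v) + Q)), sq_nonneg ((P * u + R * v) - Q),
    neg_abs_le (B * Q), abs_mul B Q, mul_le_mul_of_nonneg_right hC₁ hW]

theorem sq_sub_le_of_abs_le {a b C : ℝ} (ha : |a| ≤ C) (hb : |b| ≤ C) :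
    (a - b) ^ 2 ≤ 4 * C ^ 2 := by
  nlinarith [abs_le.mp ha, abs_le.mp hb]

theorem deriv_deriv_fun_sub {𝕜 F : Type*} [NontriviallyNormedField 𝕜] [NormedAddCommGroup F]
    [NormedSpace 𝕜 F] {f g : 𝕜 → F} (hf : ContDiff 𝕜 2 f) (hg : ContDiff 𝕜 2 g) (x : 𝕜) :
    deriv (deriv fun y => f y - g y) x = deriv (deriv f) x - deriv (deriv g) x := by
  have hderiv : deriv (fun y => f y - g y) = fun y => deriv f y - deriv g y :=
    funext fun y => deriv_fun_sub (hf.differentiable two_ne_zero y)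
      (hg.differentiable two_ne_zero y)
  rw [hderiv, deriv_fun_sub (hf.differentiable_deriv_two x) (hg.differentiable_deriv_two x)]

theorem pointwise_remainder_bound_L2_general (Z ε kmin kmax C : ℝ)
    (hε : ε ∈ Set.Ioo (0:ℝ) 1) (hkmin : 0 < kmin) :
    ∃ C₁ : ℝ, 0 < C₁ ∧
      ∀ k ∈ Set.Icc kmin kmax,
      ∀ q₁ r₁ q₂ r₂ : ℝ → ℝ,
      ContDiff ℝ 2 q₁ → ContDiff ℝ 2 r₁ → ContDiff ℝ 2 q₂ → ContDiff ℝ 2 r₂ →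
      (∀ z ∈ Set.Icc (0:ℝ) Z,
        |deriv q₁ z| ≤ C ∧ |deriv r₁ z| ≤ C ∧ |deriv q₂ z| ≤ C ∧ |deriv r₂ z| ≤ C ∧
        |deriv (deriv r₁) z| ≤ C) →
      ∀ h₁ h₂ : ℝ → ℝ,
      h₁ = (fun z => q₂ z - q₁ z) → h₂ = (fun z => r₂ z - r₁ z) →
      ∀ z ∈ Set.Icc (0:ℝ) Z,
        (L2 ε k q₂ r₂ z) ^ 2 - (L2 ε k q₁ r₁ z) ^ 2
            - 2 * L2 ε k q₁ r₁ z * L2lin ε k q₁ r₁ h₁ h₂ z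
          ≥ (1/2) * (deriv (deriv h₂) z) ^ 2
            - C₁ * ((deriv h₁ z) ^ 2 + (deriv h₂ z) ^ 2) := by
  obtain ⟨M, hM⟩ := exists_bound_L2Symbol_coeffs hε.1.ne' hkmin kmax C
  refine ⟨max 1 (4 * M ^ 2 + 2 * (3 * kmax / ε + 2 / ε ^ 2) ^ 2 * (8 * C ^ 2)
      + 2 * (C + M) * (3 * kmax / ε + 2 / ε ^ 2)),
    lt_max_of_lt_left one_pos, ?_⟩
  intro k hk q₁ r₁ q₂ r₂ hq₁ hr₁ hq₂ hr₂ hbound h₁ h₂ rfl rfl z hz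
  obtain ⟨hx₁, hy₁, hx₂, hy₂, hb₁⟩ := hbound z hz
  obtain ⟨hN, hDx, hDy⟩ := hM k hk _ _ hx₁ hy₁
  have hQ := abs_L2SymbolQuad_le hε.1 ⟨hkmin.le.trans hk.1, hk.2⟩ (deriv q₂ z - deriv q₁ z)
    (deriv r₂ z - deriv r₁ z)
  rw [L2_eq, L2_eq, L2lin_eq, deriv_deriv_fun_sub hr₂ hr₁,
    deriv_fun_sub (hq₂.differentiable two_ne_zero z) (hq₁.differentiable two_ne_zero z),
    deriv_fun_sub (hr₂.differentiable two_ne_zero z) (hr₁.differentiable two_ne_zero z),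
    L2Symbol_eq_add ε k (deriv q₁ z) (deriv r₁ z)]
  have key := sq_add_sub_sq_sub_two_mul_ge (d := deriv (deriv r₂) z - deriv (deriv r₁) z)
    (W₀ := 8 * C ^ 2) ((abs_add_le _ _).trans (add_le_add hb₁ hN)) hDx hDy hQ
    ((add_le_add (sq_sub_le_of_abs_le hx₂ hx₁) (sq_sub_le_of_abs_le hy₂ hy₁)).trans_eq (by ring))
    (le_max_right 1 _)
  linear_combination key

/-- Pointwise lower bound (6.8) for the second-order remainder of `L₂²`. -/
theorem pointwise_remainder_bound_L2 (Z ε kmin kmax C : ℝ) (hZ : 0 < Z)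
    (hε : ε ∈ Set.Ioo (0:ℝ) 1) (hkmin : 0 < kmin) (hkk : kmin ≤ kmax) (hC : 0 < C) :
    ∃ C₁ : ℝ, 0 < C₁ ∧
      ∀ k ∈ Set.Icc kmin kmax,
      ∀ q₁ r₁ q₂ r₂ : ℝ → ℝ,
      ContDiff ℝ 2 q₁ → ContDiff ℝ 2 r₁ → ContDiff ℝ 2 q₂ → ContDiff ℝ 2 r₂ →
      (∀ z ∈ Set.Icc (0:ℝ) Z,
        |deriv q₁ z| ≤ C ∧ |deriv r₁ z| ≤ C ∧ |deriv q₂ z| ≤ C ∧ |deriv r₂ z| ≤ C ∧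
        |deriv (deriv r₁) z| ≤ C) →
      ∀ h₁ h₂ : ℝ → ℝ,
      h₁ = (fun z => q₂ z - q₁ z) → h₂ = (fun z => r₂ z - r₁ z) →
      ∀ z ∈ Set.Icc (0:ℝ) Z,
        (L2 ε k q₂ r₂ z) ^ 2 - (L2 ε k q₁ r₁ z) ^ 2
            - 2 * L2 ε k q₁ r₁ z * L2lin ε k q₁ r₁ h₁ h₂ z
          ≥ (1/2) * (deriv (deriv h₂) z) ^ 2
            - C₁ * ((deriv h₁ z) ^ 2 + (deriv h₂ z) ^ 2) :=
  pointwise_remainder_bound_L2_general Z ε kmin kmax C hε hkmin
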